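/- Let G be a set of atomic constraints containing the constraint x - 0 ≤ 0 for every future clock x ∈ X_F. If v ≼_G v', δ ≥ 0 is a real, and (v+δ)(x) ≤ 0 for all x ∈ X_F, then (v'+δ)(x) ≤ 0 for all x ∈ X_F and v+δ ≼_G v'+δ. -/
import Mathlib


noncomputable section

open Classical

attribute [local instance] Classical.propDecidable

namespace GTA

/-- A comparison operator: strict `<` or non-strict `≤`. -/
inductive Cmp where
  | lt : Cmp
  | le : Cmp
deriving DecidableEq

/-- `Cmp.holds ◁ a b` means `a ◁ b` in `ℝ̄ = EReal`. -/
def Cmp.holds : Cmp → EReal → EReal → Prop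
  | .lt, a, b => a < b
  | .le, a, b => a ≤ b

/-- Extended addition on `ℝ̄`: `(+∞) + α = α + (+∞) = +∞` for all `α`,
and `(-∞) + β = β + (-∞) = -∞` for `β ≠ +∞`. -/
def eadd (a b : EReal) : EReal := if a = ⊤ ∨ b = ⊤ then ⊤ else a + b

/-- Extended subtraction `β - α := β + (-α)`. -/
def esub (a b : EReal) : EReal := eadd a (-b)

/-- Constants of atomic constraints: elements of `ℤ ∪ {-∞, +∞}`. -/
inductive EConst where
  | ninf : EConst
  | int : ℤ → EConst
  | pinf : EConst
deriving DecidableEq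

def EConst.toEReal : EConst → EReal
  | .ninf => ⊥
  | .int k => ((k : ℝ) : EReal)
  | .pinf => ⊤

variable {C : Type*}

/-- A valuation over the clock set `C` (vertices `Option C`, where `none` is the
special clock `0`), with future clocks `XF` and history clocks the complement of `XF`:
`v 0 = 0`, history clocks take values in `[0, +∞]`, future clocks in `[-∞, 0]`. -/
structure Val (C : Type*) (XF : Set C) where
  toFun : Option C → EReal
  zero' : toFun none = 0
  hist' : ∀ x : C, x ∉ XF → 0 ≤ toFun (some x)
  fut' : ∀ x : C, x ∈ XF → toFun (some x) ≤ 0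

/-- Shift of a clock map by a real delay `δ`: every clock in `X` increases by `δ`,
the special clock `0` keeps value `0`. -/
def shift (u : Option C → EReal) (δ : ℝ) : Option C → EReal
  | none => 0
  | some x => eadd (u (some x)) ((δ : ℝ) : EReal)

/-- An atomic constraint `y - x ◁ c` with `x, y ∈ X ∪ {0}` and `c ∈ ℤ ∪ {-∞,+∞}`. -/
structure Atom (C : Type*) where
  y : Option C
  x : Option C
  cmp : Cmp
  c : EConst

/-- Satisfaction `u ⊨ y - x ◁ c`, i.e. `u(y) - u(x) ◁ c` with extended subtraction. -/
def asat (u : Option C → EReal) (φ : Atom C) : Prop :=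
  φ.cmp.holds (esub (u φ.y) (u φ.x)) φ.c.toEReal

/-- The simulation preorder `≼_G` on clock maps: for every `φ ∈ G` and every real
`δ ≥ 0`, `u + δ ⊨ φ` implies `u' + δ ⊨ φ`. -/
def simLeFun (G : Set (Atom C)) (u u' : Option C → EReal) : Prop :=
  ∀ φ ∈ G, ∀ δ : ℝ, 0 ≤ δ → asat (shift u δ) φ → asat (shift u' δ) φ

/-- `v ≼_G v'` on valuations. -/
def simLe (XF : Set C) (G : Set (Atom C)) (v v' : Val C XF) : Prop :=
  simLeFun G v.toFun v'.toFun

/-- `v' ∈ [R]v`: history clocks in `R` are reset to `0`, future clocks in `R` are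
released (any value in `[-∞,0]`, automatic for valuations), other clocks unchanged. -/
def releaseRel (XF : Set C) (R : Set C) (v v' : Val C XF) : Prop :=
  (∀ x ∈ R, x ∉ XF → v'.toFun (some x) = 0) ∧
  ∀ x : C, x ∉ R → v'.toFun (some x) = v.toFun (some x)

/-- `[R]Z`. -/
def changeSet (XF : Set C) (R : Set C) (Z : Set (Val C XF)) : Set (Val C XF) :=
  { v' | ∃ v ∈ Z, releaseRel XF R v v' }

/-- Time elapse `↑Z = {v + δ : v ∈ Z, δ ≥ 0, (v+δ)(x) ≤ 0 for all future x}`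
(the latter condition is automatic since elements are valuations). -/
def elapseSet (XF : Set C) (Z : Set (Val C XF)) : Set (Val C XF) :=
  { w | ∃ v ∈ Z, ∃ δ : ℝ, 0 ≤ δ ∧ w.toFun = shift v.toFun δ }

/-- Membership of a vertex in a set of clocks (the clock `0` is in no such set). -/
def inR (R : Set C) : Option C → Prop
  | none => False
  | some x => x ∈ R

/-- `pre([R])(G)`. -/
def preChange (R : Set C) (G : Set (Atom C)) : Set (Atom C) :=
  { ψ | ∃ φ ∈ G,
      (¬ inR R φ.x ∧ ¬ inR R φ.y ∧ ψ = φ) ∨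
      (inR R φ.x ∧ ¬ inR R φ.y ∧ ψ = { φ with x := none }) ∨
      (¬ inR R φ.x ∧ inR R φ.y ∧ ψ = { φ with y := none }) }

/-- Instantaneous timed programs: guards (finite conjunctions of atomic constraints),
changes `[R]`, and sequential composition. -/
inductive Prog (C : Type*) where
  | guard : List (Atom C) → Prog C
  | change : Set C → Prog C
  | seq : Prog C → Prog C → Prog C

/-- Semantics `v →prog v'` of programs. -/
def Prog.steps (XF : Set C) : Prog C → Val C XF → Val C XF → Prop
  | .guard g, v, v' => (∀ φ ∈ g, asat v.toFun φ) ∧ v' = v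
  | .change R, v, v' => releaseRel XF R v v'
  | .seq p q, v, v' => ∃ u, Prog.steps XF p v u ∧ Prog.steps XF q u v'

/-- `pre(prog)(G)`. -/
def Prog.pre : Prog C → Set (Atom C) → Set (Atom C)
  | .guard g, G => { φ | φ ∈ g } ∪ G
  | .change R, G => preChange R G
  | .seq p q, G => Prog.pre p (Prog.pre q G)

/-- A weight `(◁, c)` with `c ∈ ℝ̄`. -/
structure Weight where
  cmp : Cmp
  c : EReal

/-- Strict order on weights. -/
def Weight.lt (w w' : Weight) : Prop :=
  w.c < w'.c ∨ (w.c = w'.c ∧ w.cmp = Cmp.lt ∧ w'.cmp = Cmp.le)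

/-- Non-strict order on weights. -/
def Weight.le (w w' : Weight) : Prop := Weight.lt w w' ∨ w = w'

/-- Sum of weights. -/
def Weight.add (w w' : Weight) : Weight :=
  if w = ⟨Cmp.lt, ⊥⟩ ∨ w' = ⟨Cmp.lt, ⊥⟩ then ⟨Cmp.lt, ⊥⟩
  else if w = ⟨Cmp.le, ⊤⟩ ∨ w' = ⟨Cmp.le, ⊤⟩ then ⟨Cmp.le, ⊤⟩
  else if w = ⟨Cmp.le, ⊥⟩ ∨ w' = ⟨Cmp.le, ⊥⟩ then ⟨Cmp.le, ⊥⟩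
  else if w = ⟨Cmp.lt, ⊤⟩ ∨ w' = ⟨Cmp.lt, ⊤⟩ then ⟨Cmp.lt, ⊤⟩
  else ⟨if w.cmp = Cmp.le ∧ w'.cmp = Cmp.le then Cmp.le else Cmp.lt, w.c + w'.c⟩

/-- Minimum of two weights. -/
def Weight.min (w w' : Weight) : Weight := if Weight.le w w' then w else w'

/-- A weight `(◁, c)` is finite if `c ∈ ℝ`. -/
def Weight.Finite (w : Weight) : Prop := w.c ≠ ⊥ ∧ w.c ≠ ⊤

/-- A distance graph: a weight on each ordered pair of distinct vertices of
`X ∪ {0}`; self-loops carry the trivial weight `(≤, +∞)`. -/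
structure DGraph (C : Type*) where
  w : Option C → Option C → Weight
  refl' : ∀ a : Option C, w a a = ⟨Cmp.le, ⊤⟩

namespace DGraph

/-- A well-formed distance graph has no edge of weight `(<, -∞)`. -/
def WF (G : DGraph C) : Prop := ∀ a b, G.w a b ≠ ⟨Cmp.lt, ⊥⟩

/-- The semantics `⟦𝔾⟧` of a distance graph. -/
def sem (G : DGraph C) (XF : Set C) : Set (Val C XF) :=
  { v | ∀ a b : Option C, (G.w a b).cmp.holds (esub (v.toFun b) (v.toFun a)) (G.w a b).c }

/-- Weight of the path `a₀ → a₁ → ⋯ → aₙ` given as the list `[a₀, …, aₙ]`. -/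
def chainWeight (G : DGraph C) : List (Option C) → Weight
  | a :: b :: l => Weight.add (G.w a b) (G.chainWeight (b :: l))
  | _ => ⟨Cmp.le, 0⟩

end DGraph

/-- `l` is a path from `a` to `b`: at least one edge, consecutive vertices distinct. -/
def IsPath (l : List (Option C)) (a b : Option C) : Prop :=
  2 ≤ l.length ∧ l.head? = some a ∧ l.getLast? = some b ∧ l.Chain' (· ≠ ·)

namespace DGraph

/-- `𝔾` has a negative cycle: a cycle of weight strictly less than `(≤, 0)`. -/
def HasNegCycle (G : DGraph C) : Prop :=
  ∃ (a : Option C) (l : List (Option C)),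
    IsPath l a a ∧ Weight.lt (G.chainWeight l) ⟨Cmp.le, 0⟩

/-- `𝔾` is in standard form. -/
def Standard (G : DGraph C) (XF : Set C) : Prop :=
  (∀ x ∈ XF, Weight.le (G.w none (some x)) ⟨Cmp.le, 0⟩) ∧
  (∀ x : C, x ∉ XF → Weight.le (G.w (some x) none) ⟨Cmp.le, 0⟩) ∧
  (∀ x y : C, G.w (some x) (some y) ≠ ⟨Cmp.le, ⊤⟩ →
    G.w (some x) none ≠ ⟨Cmp.le, ⊤⟩ ∧ G.w none (some y) ≠ ⟨Cmp.le, ⊤⟩)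

/-- `𝔾` is normalized: standard form, no negative cycle, and every edge weight is
minimal among the weights of paths between its endpoints. -/
def Normalized (G : DGraph C) (XF : Set C) : Prop :=
  G.Standard XF ∧ ¬ G.HasNegCycle ∧
  ∀ (a b : Option C) (l : List (Option C)), a ≠ b → IsPath l a b →
    Weight.le (G.w a b) (G.chainWeight l)

/-- Weight function of the standardization of `𝔾`. -/
def stdW (G : DGraph C) (XF : Set C) : Option C → Option C → Weight
  | none, some y =>
      if y ∈ XF then Weight.min (G.w none (some y)) ⟨Cmp.le, 0⟩
      else if ∃ a : Option C, a ≠ some y ∧ G.w a (some y) ≠ ⟨Cmp.le, ⊤⟩ then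
        Weight.min (G.w none (some y)) ⟨Cmp.lt, ⊤⟩
      else G.w none (some y)
  | some x, none =>
      if x ∈ XF then
        (if ∃ b : Option C, b ≠ some x ∧ G.w (some x) b ≠ ⟨Cmp.le, ⊤⟩ then
          Weight.min (G.w (some x) none) ⟨Cmp.lt, ⊤⟩
        else G.w (some x) none)
      else Weight.min (G.w (some x) none) ⟨Cmp.le, 0⟩
  | a, b => G.w a b

/-- The standardization of a distance graph. -/
def standardize (G : DGraph C) (XF : Set C) : DGraph C where
  w := G.stdW XF
  refl' := fun a => by
    cases a with
    | none => exact G.refl' none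
    | some x => exact G.refl' (some x)

/-- Intersecting a distance graph with a single atomic constraint `y - x ◁ c`:
the weight of the edge `x → y` is replaced by `min(𝔾_{xy}, (◁, c))`. -/
def addAtom (G : DGraph C) (φ : Atom C) : DGraph C where
  w := fun a b =>
    if a = φ.x ∧ b = φ.y ∧ φ.x ≠ φ.y then
      Weight.min (G.w a b) ⟨φ.cmp, φ.c.toEReal⟩
    else G.w a b
  refl' := fun a => by
    have h : ¬ (a = φ.x ∧ a = φ.y ∧ φ.x ≠ φ.y) := by
      rintro ⟨h1, h2, h3⟩
      exact h3 (h1 ▸ h2 ▸ rfl)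
    show (if a = φ.x ∧ a = φ.y ∧ φ.x ≠ φ.y then
      Weight.min (G.w a a) ⟨φ.cmp, φ.c.toEReal⟩ else G.w a a) = ⟨Cmp.le, ⊤⟩
    rw [if_neg h]
    exact G.refl' a

/-- Intersecting a distance graph with a guard (list of atomic constraints). -/
def guardGraph (G : DGraph C) : List (Atom C) → DGraph C
  | [] => G
  | φ :: g => (G.guardGraph g).addAtom φ

/-- Edgewise minimum of two distance graphs. -/
def minG (G H : DGraph C) : DGraph C where
  w := fun a b => Weight.min (G.w a b) (H.w a b)
  refl' := fun a => by
    show Weight.min (G.w a a) (H.w a a) = _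
    rw [G.refl', H.refl']
    exact ite_self _

end DGraph

/-- The distance graph `𝔾_v^G`. -/
def upGraph (XF : Set C) (G : Set (Atom C)) (v : Val C XF) : DGraph C where
  w := fun a b =>
    match a, b with
    | some x, none =>
        if x ∈ XF then ⟨Cmp.le, -(v.toFun (some x))⟩
        else if ∃ φ ∈ G, φ.y = none ∧ φ.x = some x ∧ φ.c ≠ EConst.ninf ∧ ¬ asat v.toFun φ
          then ⟨Cmp.le, -(v.toFun (some x))⟩
        else ⟨Cmp.le, ⊤⟩
    | none, some y =>
        if y ∈ XF then ⟨Cmp.le, v.toFun (some y)⟩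
        else if ∃ φ ∈ G, φ.y = some y ∧ φ.x = none ∧ φ.c ≠ EConst.pinf ∧ asat v.toFun φ
          then ⟨Cmp.le, v.toFun (some y)⟩
        else ⟨Cmp.le, ⊤⟩
    | _, _ => ⟨Cmp.le, ⊤⟩
  refl' := fun a => by cases a <;> rfl

/-- The guard `g_v^G`: all constraints of `G` satisfied by `v`. -/
def upGuard (G : Set (Atom C)) (u : Option C → EReal) : Set (Atom C) :=
  { φ ∈ G | asat u φ }

/-- An atomic constraint is `M`-bounded. -/
def MBounded (M : ℕ) (φ : Atom C) : Prop :=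
  (∃ k : ℤ, φ.c = EConst.int k ∧ -(M : ℤ) ≤ k ∧ k ≤ (M : ℤ)) ∨
  (φ.cmp = Cmp.le ∧ φ.c = EConst.ninf) ∨ φ.c = EConst.pinf

/-- An atomic constraint is `M`-bounded integral (constant in `{-∞,+∞} ∪ [-M, M] ∩ ℤ`). -/
def MBoundedIntegral (M : ℕ) (φ : Atom C) : Prop :=
  (∃ k : ℤ, φ.c = EConst.int k ∧ -(M : ℤ) ≤ k ∧ k ≤ (M : ℤ)) ∨
  φ.c = EConst.ninf ∨ φ.c = EConst.pinf

/-- An atomic constraint is `X_D`-safe: if both endpoints are future clocks,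
they are in `X_D`. -/
def XDSafe (XF XD : Set C) (φ : Atom C) : Prop :=
  ∀ x y : C, φ.x = some x → φ.y = some y → x ∈ XF → y ∈ XF → x ∈ XD ∧ y ∈ XD

/-- Vertices in `X_F ∪ {0}`. -/
def futV (XF : Set C) : Option C → Prop
  | none => True
  | some x => x ∈ XF

/-- Vertices in `X_H ∪ {0}`. -/
def histV (XF : Set C) : Option C → Prop
  | none => True
  | some x => x ∉ XF

/-- The equivalence `v₁ ≃ v₂`: agreement on history clocks and on all
`(X_D, M)`-safe constraints over `X_F ∪ {0}`. -/
def simeqV (XF XD : Set C) (M : ℕ) (v₁ v₂ : Val C XF) : Prop :=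
  (∀ x : C, x ∉ XF → v₁.toFun (some x) = v₂.toFun (some x)) ∧
  ∀ φ : Atom C, XDSafe XF XD φ → MBounded M φ → futV XF φ.x → futV XF φ.y →
    (asat v₁.toFun φ ↔ asat v₂.toFun φ)

/-- `(X_D, M)`-safely reachable zones: obtained from the initial zone
`↑(𝕍 ∧ g₀)` (`g₀` fixing each history clock to `0` or `+∞`) by the
`(X_D, M)`-safe zone operations. -/
inductive SafeReach (XF XD : Set C) (M : ℕ) : Set (Val C XF) → Prop where
  | init (f : C → EReal) (hf : ∀ x : C, x ∉ XF → f x = 0 ∨ f x = ⊤) :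
      SafeReach XF XD M (elapseSet XF { v | ∀ x : C, x ∉ XF → v.toFun (some x) = f x })
  | guard {Z : Set (Val C XF)} (g : Set (Atom C))
      (hg : ∀ φ ∈ g, XDSafe XF XD φ ∧ MBounded M φ)
      (h : SafeReach XF XD M Z) :
      SafeReach XF XD M { v ∈ Z | ∀ φ ∈ g, asat v.toFun φ }
  | changeSimple {Z : Set (Val C XF)} (x : C) (hx : x ∉ XD) (h : SafeReach XF XD M Z) :
      SafeReach XF XD M (changeSet XF {x} Z)
  | changeD {Z : Set (Val C XF)} (x : C) (hx : x ∈ XD) (c : EReal) (hc : c = 0 ∨ c = ⊥)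
      (h : SafeReach XF XD M Z) :
      SafeReach XF XD M (changeSet XF {x} { v ∈ Z | v.toFun (some x) = c })
  | elapse {Z : Set (Val C XF)} (h : SafeReach XF XD M Z) :
      SafeReach XF XD M (elapseSet XF Z)

/-- `α ∼_K β` on `ℝ̄`. -/
def eqvK (K : ℕ) (α β : EReal) : Prop :=
  ∀ (cmp : Cmp) (c : EReal),
    (c = ⊥ ∨ c = ⊤ ∨ ∃ k : ℤ, c = ((k : ℝ) : EReal) ∧ |k| ≤ (K : ℤ)) →
    (cmp.holds α c ↔ cmp.holds β c)

/-- The equivalence `v ∼ⁿ_M v'` on valuations. -/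
def simVn (XF : Set C) (M n : ℕ) (v v' : Val C XF) : Prop :=
  (∀ x : C, eqvK (n * M) (v.toFun (some x)) (v'.toFun (some x))) ∧
  ∀ x y : C, eqvK ((n + 1) * M)
    (esub (v.toFun (some x)) (v.toFun (some y)))
    (esub (v'.toFun (some x)) (v'.toFun (some y)))

/-- The `(†)` conditions for a distance graph with bound `B` (usually `B = nM`). -/
def Dagger (XF : Set C) (B : ℕ) (G : DGraph C) : Prop :=
  (∀ x ∈ XF, (∃ b : Option C, histV XF b ∧ (G.w (some x) b).Finite) →
     Weight.le ⟨Cmp.le, 0⟩ (G.w (some x) none) ∧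
     Weight.le (G.w (some x) none) ⟨Cmp.le, ((B : ℝ) : EReal)⟩) ∧
  (∀ x ∈ XF, (G.w none (some x)).Finite →
     Weight.le ⟨Cmp.lt, ((-(B : ℝ) : ℝ) : EReal)⟩ (G.w none (some x)) ∧
     Weight.le (G.w none (some x)) ⟨Cmp.le, 0⟩) ∧
  (∀ x : C, x ∉ XF → ∀ y ∈ XF, (G.w none (some y)).Finite →
     Weight.le (Weight.add (G.w (some x) none) ⟨Cmp.lt, ((-(B : ℝ) : ℝ) : EReal)⟩)
       (G.w (some x) (some y))) ∧
  (∀ x ∈ XF, ∀ y ∈ XF, (G.w (some x) (some y)).Finite →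
     Weight.le ⟨Cmp.lt, ((-(B : ℝ) : ℝ) : EReal)⟩ (G.w (some x) (some y)) ∧
     Weight.le (G.w (some x) (some y)) ⟨Cmp.le, ((B : ℝ) : EReal)⟩)

end GTA

namespace GTA

lemma eadd_real (a : EReal) (r : ℝ) : eadd a ((r : ℝ) : EReal) = a + r := by
  unfold eadd
  split
  · rename_i h
    rcases h with h | h
    · simp [h]
    · exact absurd h (by simp)
  · rfl

lemma shift_shift {C : Type*} (u : Option C → EReal) (δ δ' : ℝ) :
    shift (shift u δ) δ' = shift u (δ + δ') := by
  funext a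
  cases a with
  | none => rfl
  | some x =>
      show eadd (eadd (u (some x)) _) _ = eadd (u (some x)) _
      rw [eadd_real, eadd_real, eadd_real]
      push_cast
      rw [add_assoc]

lemma shift_none {C : Type*} (u : Option C → EReal) (δ : ℝ) : shift u δ none = 0 := rfl

lemma key_atom {C : Type*} (u : Option C → EReal) (δ : ℝ) (x : C) :
    asat (shift u δ) (⟨some x, none, Cmp.le, EConst.int 0⟩ : Atom C) ↔
      shift u δ (some x) ≤ 0 := by
  unfold asat esub
  show Cmp.holds Cmp.le (eadd (shift u δ (some x)) (-(0 : EReal))) _ ↔ _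
  rw [neg_zero]
  have : eadd (shift u δ (some x)) 0 = shift u δ (some x) := by
    have := eadd_real (shift u δ (some x)) 0
    simpa using this
  rw [this]
  show shift u δ (some x) ≤ (((0 : ℤ) : ℝ) : EReal) ↔ _
  norm_num

/-- if `G` contains `x - 0 ≤ 0` for every future clock `x`, `v ≼_G v'`,
`δ ≥ 0` and `(v+δ)(x) ≤ 0` for all future clocks, then `(v'+δ)(x) ≤ 0` for all future
clocks and `v+δ ≼_G v'+δ`. -/
theorem delay_simulation {C : Type*} [Finite C] (XF : Set C) (G : Set (Atom C))
    (hG : ∀ x ∈ XF, (⟨some x, none, Cmp.le, EConst.int 0⟩ : Atom C) ∈ G)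
    (v v' : Val C XF) (hsim : simLe XF G v v')
    (δ : ℝ) (hδ : 0 ≤ δ)
    (hfut : ∀ x ∈ XF, shift v.toFun δ (some x) ≤ 0) :
    (∀ x ∈ XF, shift v'.toFun δ (some x) ≤ 0) ∧
    simLeFun G (shift v.toFun δ) (shift v'.toFun δ) := by
  constructor
  · intro x hx
    rw [← key_atom]
    exact hsim _ (hG x hx) δ hδ ((key_atom v.toFun δ x).2 (hfut x hx))
  · intro φ hφ δ' hδ' hsat
    rw [shift_shift] at hsat ⊢
    exact hsim φ hφ (δ + δ') (by linarith) hsat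

end GTA
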